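/- Let p ≥ 2, r ≥ 2, and let w be any positive braid word on p strands of the form w = α · ((σ_1⋯σ_{p-1})^p)^r, where α is an arbitrary positive braid word. Then any two distinct strands of w cross at least 2r ≥ 4 times. Consequently, any two distinct components of the closure of w have linking number at least r ≥ 2 (linking number being half the crossing count between the components, all crossings being positive). -/

import Mathlib

open scoped Classical

/-- The orbit of `x` under a permutation `π`: `{π^n x : n ∈ ℤ}`. -/
def permOrbit {α : Type*} (π : Equiv.Perm α) (x : α) : Set α := {y | π.SameCycle x y}

/-- The number of orbits of a permutation. -/
noncomputable def orbitCount {α : Type*} (π : Equiv.Perm α) : ℕ :=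
  (Set.range (permOrbit π)).ncard

/-- The transposition of adjacent positions `i`, `i+1` (0-indexed) on `Fin p`,
corresponding to the braid letter `σ_{i+1}`; identity if out of range. -/
def stepPerm (p i : ℕ) : Equiv.Perm (Fin p) :=
  if h : i + 1 < p then Equiv.swap ⟨i, Nat.lt_of_succ_lt h⟩ ⟨i + 1, h⟩ else 1

/-- Position-tracking: `posAfter p w t` is the position function after the first
`t` letters of the positive braid word `w` (letter `i` denotes `σ_{i+1}`). -/
def posAfter (p : ℕ) (w : List ℕ) (t : ℕ) : Equiv.Perm (Fin p) :=
  ((w.take t).map (stepPerm p)).foldl (fun a g => g * a) 1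

/-- The underlying permutation of a positive braid word. -/
def permOf (p : ℕ) (w : List ℕ) : Equiv.Perm (Fin p) := posAfter p w w.length

/-- The number of letters of `w` at which strands `s` and `s'` cross. -/
def crossCount (p : ℕ) (w : List ℕ) (s s' : Fin p) : ℕ :=
  ((Finset.range w.length).filter fun t =>
    ({(posAfter p w t s).val, (posAfter p w t s').val} : Finset ℕ)
      = {w.getD t 0, w.getD t 0 + 1}).card

/-- Concatenation of `q` copies of the word `u`. -/
def wordPow (u : List ℕ) (q : ℕ) : List ℕ := (List.replicate q u).flatten

/-- The word `σ_1 σ_2 ⋯ σ_{m-1}` (0-indexed letters `0,…,m-2`). -/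
def ascBlock (m : ℕ) : List ℕ := List.range (m - 1)

/-- The full twist word `(σ_1 ⋯ σ_{p-1})^p` on `p` strands. -/
def fullTwistWord (p : ℕ) : List ℕ := wordPow (ascBlock p) p

/-- The orbit of `x` under `π`, as a finset. -/
noncomputable def orbitFinset (p : ℕ) (π : Equiv.Perm (Fin p)) (x : Fin p) : Finset (Fin p) :=
  Finset.univ.filter fun y => π.SameCycle x y

/-- Total number of crossings in `w` between the strands of the component of `s`
and the strands of the component of `s'` (components w.r.t. `π`). -/
noncomputable def crossBetween (p : ℕ) (w : List ℕ) (π : Equiv.Perm (Fin p))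
    (s s' : Fin p) : ℕ :=
  ∑ x ∈ orbitFinset p π s, ∑ y ∈ orbitFinset p π s', crossCount p w x y

/-- Linking number of the components of `s` and `s'` in the closure of the positive
braid word `w`: half the number of crossings between them. -/
noncomputable def linking (p : ℕ) (w : List ℕ) (π : Equiv.Perm (Fin p))
    (s s' : Fin p) : ℕ :=
  crossBetween p w π s s' / 2

/-- The 3-cycle `(0 1 2)` on `Fin N`, fixing all other points. -/
def tau3 (N : ℕ) (h : 3 ≤ N) : Equiv.Perm (Fin N) :=
  Equiv.swap ⟨0, by omega⟩ ⟨2, by omega⟩ * Equiv.swap ⟨0, by omega⟩ ⟨1, by omega⟩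

/-- `Fin s` is equivalent to the points of `Fin N` with value `< s`. -/
def subEquiv (s N : ℕ) (h : s ≤ N) : Fin s ≃ {x : Fin N // (x : ℕ) < s} where
  toFun x := ⟨⟨x, lt_of_lt_of_le x.2 h⟩, x.2⟩
  invFun y := ⟨(y.1 : ℕ), y.2⟩
  left_inv x := rfl
  right_inv y := rfl

/-- The permutation of `Fin N` acting as `x ↦ x + c (mod s)` on `{0,…,s-1}` and
fixing all points `≥ s`. -/
def tauShift (s c N : ℕ) (h : s ≤ N) : Equiv.Perm (Fin N) :=
  (finRotate s ^ c).extendDomain (subEquiv s N h)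

/-!
In `σ_1 ⋯ σ_{p-1}` the strand starting at position `0` crosses every other strand once, and
the block shifts every other position down by one (cyclically). Over the `p` blocks of a full
twist each of two distinct strands `s, s'` therefore starts a block at position `0` once, so
they cross at least twice per full twist. Crossing counts add under concatenation, so `r` full
twists give `2r` crossings whatever `α` is, and the crossings between two components include
those between any strand of the one and any strand of the other.
-/

lemma List.foldl_mul_left_eq {G : Type*} [Monoid G] (l : List G) (x : G) :
    l.foldl (fun a g => g * a) x = l.foldl (fun a g => g * a) 1 * x := by
  induction l generalizing x with
  | nil => simp
  | cons h t ih =>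
    simp only [List.foldl_cons]
    rw [ih (h * x), ih (h * 1), mul_one, mul_assoc]

lemma stepPerm_apply_val {p i : ℕ} (h : i + 1 < p) (z : Fin p) :
    (stepPerm p i z : ℕ) = if (z : ℕ) = i then i + 1 else if (z : ℕ) = i + 1 then i else z := by
  rw [stepPerm, dif_pos h, Equiv.swap_apply_def]
  simp only [Fin.ext_iff]
  split_ifs <;> rfl

section PositionTracking

variable (p : ℕ)

lemma posAfter_zero (w : List ℕ) : posAfter p w 0 = 1 := by
  simp [posAfter]

lemma posAfter_succ (w : List ℕ) {t : ℕ} (ht : t < w.length) :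
    posAfter p w (t + 1) = stepPerm p (w.getD t 0) * posAfter p w t := by
  unfold posAfter
  rw [List.take_add_one, List.getElem?_eq_getElem ht]
  simp only [Option.toList_some, List.map_append, List.foldl_append, List.map_cons,
    List.map_nil, List.foldl_cons, List.foldl_nil]
  rw [List.foldl_mul_left_eq, List.getD_eq_getElem _ _ ht]

lemma posAfter_append_of_le (u v : List ℕ) {t : ℕ} (ht : t ≤ u.length) :
    posAfter p (u ++ v) t = posAfter p u t := by
  rw [posAfter, posAfter, List.take_append_of_le_length ht]

lemma posAfter_append_length_add (u v : List ℕ) (k : ℕ) :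
    posAfter p (u ++ v) (u.length + k) = posAfter p v k * permOf p u := by
  unfold posAfter permOf posAfter
  rw [List.take_append, List.map_append, List.foldl_append, List.foldl_mul_left_eq,
    List.take_length, Nat.add_sub_cancel_left, List.take_of_length_le (l := u) (by omega)]

lemma crossCount_comm (w : List ℕ) (s s' : Fin p) :
    crossCount p w s s' = crossCount p w s' s := by
  unfold crossCount
  congr 1
  refine Finset.filter_congr fun t _ => ?_
  rw [Finset.pair_comm ((posAfter p w t s).val)]

lemma crossCount_append (u v : List ℕ) (s s' : Fin p) :
    crossCount p (u ++ v) s s' =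
      crossCount p u s s' + crossCount p v (permOf p u s) (permOf p u s') := by
  unfold crossCount
  rw [List.length_append, Finset.range_add, Finset.filter_union,
    Finset.card_union_of_disjoint, Finset.filter_map, Finset.card_map]
  · congr 1
    · congr 1
      refine Finset.filter_congr fun t ht => ?_
      rw [Finset.mem_range] at ht
      rw [posAfter_append_of_le p u v ht.le,
        List.getD_eq_getElem (u ++ v) _ (by simp; omega), List.getD_eq_getElem _ _ ht,
        List.getElem_append_left]
    · congr 1
      refine Finset.filter_congr fun k hk => ?_
      rw [Finset.mem_range] at hk
      simp only [Function.comp, addLeftEmbedding_apply]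
      rw [posAfter_append_length_add p u v k,
        List.getD_eq_getElem (u ++ v) _ (by simp; omega), List.getD_eq_getElem _ _ hk]
      simp [List.getElem_append_right, Equiv.Perm.mul_apply]
  · rw [Finset.disjoint_left]
    intro a ha hb
    rw [Finset.mem_filter, Finset.mem_range] at ha
    obtain ⟨⟨k, -, rfl⟩, -⟩ := (Finset.mem_filter.1 hb).imp_left Finset.mem_map.1
    simp at ha

lemma wordPow_succ (u : List ℕ) (q : ℕ) : wordPow u (q + 1) = u ++ wordPow u q := by
  simp [wordPow, List.replicate_succ]

lemma crossCount_wordPow (u : List ℕ) (q : ℕ) (s s' : Fin p) :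
    crossCount p (wordPow u q) s s' =
      ∑ k ∈ Finset.range q, crossCount p u ((permOf p u ^ k) s) ((permOf p u ^ k) s') := by
  induction q generalizing s s' with
  | zero => simp [wordPow, crossCount]
  | succ q ih =>
    rw [wordPow_succ, crossCount_append, ih, Finset.sum_range_succ']
    simp only [pow_succ, Equiv.Perm.mul_apply, pow_zero, Equiv.Perm.one_apply]
    omega

lemma mul_le_crossCount_wordPow {u : List ℕ} {c : ℕ}
    (hu : ∀ s s' : Fin p, s ≠ s' → c ≤ crossCount p u s s') (q : ℕ) {s s' : Fin p}
    (h : s ≠ s') : c * q ≤ crossCount p (wordPow u q) s s' := by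
  rw [crossCount_wordPow]
  simpa [mul_comm] using Finset.card_nsmul_le_sum (Finset.range q) _ c
    fun k _ => hu _ _ ((permOf p u ^ k).injective.ne h)

lemma crossCount_le_crossBetween (w : List ℕ) (π : Equiv.Perm (Fin p)) (s s' : Fin p) :
    crossCount p w s s' ≤ crossBetween p w π s s' := by
  have mem_orbit (x : Fin p) : x ∈ orbitFinset p π x := by
    simp [orbitFinset, Equiv.Perm.SameCycle.refl]
  calc crossCount p w s s'
      ≤ ∑ y ∈ orbitFinset p π s', crossCount p w s y :=
        Finset.single_le_sum (fun _ _ => Nat.zero_le _) (mem_orbit s')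
    _ ≤ crossBetween p w π s s' :=
        Finset.single_le_sum (f := fun x => ∑ y ∈ orbitFinset p π s', crossCount p w x y)
          (fun _ _ => Nat.zero_le _) (mem_orbit s)

end PositionTracking

section AscBlock

variable {p : ℕ}

lemma ascBlock_length (p : ℕ) : (ascBlock p).length = p - 1 := by
  simp [ascBlock]

lemma ascBlock_getD {t : ℕ} (ht : t < p - 1) : (ascBlock p).getD t 0 = t := by
  rw [List.getD_eq_getElem _ _ (by rwa [ascBlock_length])]
  simp [ascBlock]

lemma posAfter_ascBlock_val {t : ℕ} (ht : t ≤ p - 1) (z : Fin p) :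
    (posAfter p (ascBlock p) t z : ℕ) =
      if (z : ℕ) = 0 then t else if (z : ℕ) ≤ t then (z : ℕ) - 1 else z := by
  induction t with
  | zero =>
    rw [posAfter_zero, Equiv.Perm.one_apply]
    split_ifs <;> omega
  | succ t ih =>
    have hz := z.isLt
    rw [posAfter_succ p _ (by rw [ascBlock_length]; omega), ascBlock_getD (by omega),
      Equiv.Perm.mul_apply, stepPerm_apply_val (by omega), ih (by omega)]
    split_ifs <;> omega

lemma permOf_ascBlock_val (z : Fin p) :
    (permOf p (ascBlock p) z : ℕ) = ((z : ℕ) + (p - 1)) % p := by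
  have hz := z.isLt
  rw [permOf, ascBlock_length, posAfter_ascBlock_val le_rfl]
  split_ifs with h0 h1
  · rw [h0, Nat.zero_add, Nat.mod_eq_of_lt (by omega)]
  · rw [show (z : ℕ) + (p - 1) = (z - 1) + p by omega, Nat.add_mod_right,
      Nat.mod_eq_of_lt (by omega)]
  · omega

lemma permOf_ascBlock_pow_val (k : ℕ) (z : Fin p) :
    ((permOf p (ascBlock p) ^ k) z : ℕ) = ((z : ℕ) + k * (p - 1)) % p := by
  induction k with
  | zero => simp [Nat.mod_eq_of_lt z.isLt]
  | succ k ih =>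
    rw [pow_succ', Equiv.Perm.mul_apply, permOf_ascBlock_val, ih, Nat.mod_add_mod]
    congr 1
    ring

lemma permOf_ascBlock_pow_self_val (s : Fin p) :
    ((permOf p (ascBlock p) ^ (s : ℕ)) s : ℕ) = 0 := by
  obtain ⟨n, rfl⟩ : ∃ n, p = n + 1 := ⟨p - 1, by have := s.pos; omega⟩
  rw [permOf_ascBlock_pow_val, Nat.add_sub_cancel, add_comm (s : ℕ), ← mul_add_one,
    Nat.mul_mod_left]

-- The crossing is at letter `y - 1`, where the strand from `0` meets the strand from `y`.
lemma one_le_crossCount_ascBlock {x y : Fin p} (hx : (x : ℕ) = 0) (hxy : x ≠ y) :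
    1 ≤ crossCount p (ascBlock p) x y := by
  have hy : (y : ℕ) ≠ 0 := fun hy => hxy (Fin.ext (hx.trans hy.symm))
  have hyp := y.isLt
  rw [crossCount, Finset.one_le_card]
  refine ⟨(y : ℕ) - 1, Finset.mem_filter.2 ⟨?_, ?_⟩⟩
  · rw [Finset.mem_range, ascBlock_length]; omega
  · rw [posAfter_ascBlock_val (by omega), posAfter_ascBlock_val (by omega), hx,
      if_pos rfl, if_neg hy, if_neg (by omega), ascBlock_getD (by omega)]
    congr 2
    omega

lemma two_le_crossCount_fullTwistWord {s s' : Fin p} (h : s ≠ s') :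
    2 ≤ crossCount p (fullTwistWord p) s s' := by
  rw [fullTwistWord, crossCount_wordPow]
  set c := permOf p (ascBlock p)
  set f : ℕ → ℕ := fun k => crossCount p (ascBlock p) ((c ^ k) s) ((c ^ k) s')
  have hs : 1 ≤ f s :=
    one_le_crossCount_ascBlock (permOf_ascBlock_pow_self_val s) ((c ^ (s : ℕ)).injective.ne h)
  have hs' : 1 ≤ f s' := by
    simp only [f]
    rw [crossCount_comm]
    exact one_le_crossCount_ascBlock (permOf_ascBlock_pow_self_val s')
      ((c ^ (s' : ℕ)).injective.ne h.symm)
  have hsub : ({(s : ℕ), (s' : ℕ)} : Finset ℕ) ⊆ Finset.range p := by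
    simp [Finset.insert_subset_iff]
  calc 2 ≤ f s + f s' := by omega
    _ = ∑ k ∈ ({(s : ℕ), (s' : ℕ)} : Finset ℕ), f k :=
        (Finset.sum_pair (Fin.val_injective.ne h)).symm
    _ ≤ ∑ k ∈ Finset.range p, f k := Finset.sum_le_sum_of_subset hsub

end AscBlock

theorem stmt6_general (p r : ℕ) (α : List ℕ) :
    (∀ s s' : Fin p, s ≠ s' →
        2 * r ≤ crossCount p (α ++ wordPow (fullTwistWord p) r) s s') ∧
    (∀ s s' : Fin p,
        ¬ (permOf p (α ++ wordPow (fullTwistWord p) r)).SameCycle s s' →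
        r ≤ linking p (α ++ wordPow (fullTwistWord p) r)
              (permOf p (α ++ wordPow (fullTwistWord p) r)) s s') := by
  have strands : ∀ s s' : Fin p, s ≠ s' →
      2 * r ≤ crossCount p (α ++ wordPow (fullTwistWord p) r) s s' := by
    intro s s' h
    rw [crossCount_append]
    have := mul_le_crossCount_wordPow p (fun _ _ => two_le_crossCount_fullTwistWord) r
      ((permOf p α).injective.ne h)
    omega
  refine ⟨strands, fun s s' hns => ?_⟩
  have hne : s ≠ s' := fun h => hns (h ▸ Equiv.Perm.SameCycle.refl _ s)
  rw [linking, Nat.le_div_iff_mul_le two_pos, mul_comm]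
  exact (strands s s' hne).trans (crossCount_le_crossBetween p _ _ s s')

/-- If `w = α · ((σ_1⋯σ_{p-1})^p)^r` with `α` positive and `r ≥ 2`, then any two
distinct strands cross at least `2r ≥ 4` times; consequently any two distinct
components of the closure have linking number (half the crossing count) at least
`r ≥ 2`. -/
theorem stmt6 (p r : ℕ) (α : List ℕ) (hp : 2 ≤ p) (hr : 2 ≤ r)
    (hα : ∀ i ∈ α, i + 1 < p) :
    (∀ s s' : Fin p, s ≠ s' →
        2 * r ≤ crossCount p (α ++ wordPow (fullTwistWord p) r) s s') ∧
    (∀ s s' : Fin p,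
        ¬ (permOf p (α ++ wordPow (fullTwistWord p) r)).SameCycle s s' →
        r ≤ linking p (α ++ wordPow (fullTwistWord p) r)
              (permOf p (α ++ wordPow (fullTwistWord p) r)) s s') :=
  stmt6_general p r α
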